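/- arXiv:2412.07495 — 4 statements merged into one kernel-verified Lean document; each statement's English description precedes it below -/
import Mathlib

section
/- Let C and (T,D,X) be random variables with C independent of (T,D,X) given a discrete random variable Z, and suppose G(s|z) := P(C > s | Z = z) satisfies G(t-|z) > 0 for all z in the support of Z, for a fixed t > 0. Define W = 1{C ≥ T ∧ t} / G((T ∧ t)- | Z). Then E(W | T, D, X, Z) = 1 almost surely. -/
open MeasureTheory ProbabilityTheory Set
open scoped ENNReal

/-!
Within a stratum `Z = z` of positive probability, `Z` is a.s. constant under `μ[|Z = z]`, so `C` is
independent of the whole of `V = (T, D, X, Z)` and the joint law of `(V, C)` is a product. Integrating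
the weight `1{C ≥ s} / P(C ≥ s)` over `C` first, with `s = T ∧ t` frozen, gives exactly `1`; hence
`∫_{V ∈ A} W = P(V ∈ A)` in every stratum. Summing over the countably many strata gives the same
identity under `μ`, and these identities characterise `E(W | V) = 1`.
-/

namespace ProbabilityTheory

variable {Ω β ι : Type*} [MeasurableSpace Ω] [MeasurableSpace β] {ν : Measure Ω}

/-- `1{s ≤ c} / G(s-)` with `G(s-) = ν(C ≥ s)`. Where `G(s-) = 0` this is `∞`, whose `toReal` is the
`0` that real division by zero gives. -/
noncomputable def ipcwWeight (ν : Measure Ω) (C : Ω → ℝ) (s c : ℝ) : ℝ≥0∞ :=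
  if s ≤ c then (ν {ω | s ≤ C ω})⁻¹ else 0

lemma measurable_ipcwWeight (ν : Measure Ω) (C : Ω → ℝ) :
    Measurable fun p : ℝ × ℝ => ipcwWeight ν C p.1 p.2 := by
  have hsurv : Measurable fun s => ν {ω | s ≤ C ω} :=
    Antitone.measurable fun s₁ s₂ h => measure_mono fun ω hω => h.trans hω
  exact Measurable.ite (measurableSet_le measurable_fst measurable_snd)
    (hsurv.comp measurable_fst).inv measurable_const

lemma lintegral_ipcwWeight [IsFiniteMeasure ν] {C : Ω → ℝ} (hC : Measurable C) {s : ℝ}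
    (hs : ν {ω | s ≤ C ω} ≠ 0) : ∫⁻ ω, ipcwWeight ν C s (C ω) ∂ν = 1 := by
  have hind : (fun ω => ipcwWeight ν C s (C ω)) =
      {ω | s ≤ C ω}.indicator fun _ => (ν {ω | s ≤ C ω})⁻¹ := by
    ext ω
    simp [ipcwWeight, indicator]
  rw [hind, lintegral_indicator_const (measurableSet_le measurable_const hC),
    ENNReal.inv_mul_cancel hs (measure_ne_top ν _)]

theorem setLIntegral_ipcwWeight [IsFiniteMeasure ν] {C : Ω → ℝ} {Y : Ω → β}
    (hC : Measurable C) (hY : Measurable Y) (hind : IndepFun C Y ν) {a : β → ℝ}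
    (ha : Measurable a) (hpos : ∀ y, ν {ω | a y ≤ C ω} ≠ 0) {B : Set β} (hB : MeasurableSet B) :
    ∫⁻ ω in Y ⁻¹' B, ipcwWeight ν C (a (Y ω)) (C ω) ∂ν = ν (Y ⁻¹' B) := by
  set F : β × ℝ → ℝ≥0∞ := fun p => ipcwWeight ν C (a p.1) p.2
  have hF : Measurable F :=
    (measurable_ipcwWeight ν C).comp ((ha.comp measurable_fst).prodMk measurable_snd)
  have hjoint : ν.map (fun ω => (Y ω, C ω)) = (ν.map Y).prod (ν.map C) :=
    (indepFun_iff_map_prod_eq_prod_map_map hY.aemeasurable hC.aemeasurable).1 hind.symm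
  calc ∫⁻ ω in Y ⁻¹' B, ipcwWeight ν C (a (Y ω)) (C ω) ∂ν
      = ∫⁻ p in B ×ˢ univ, F p ∂(ν.map fun ω => (Y ω, C ω)) := by
        rw [setLIntegral_map (hB.prod .univ) hF (hY.prodMk hC), mk_preimage_prod, preimage_univ,
          inter_univ]
    _ = ∫⁻ y in B, ∫⁻ c, F (y, c) ∂(ν.map C) ∂(ν.map Y) := by
        rw [hjoint, ← Measure.prod_restrict, Measure.restrict_univ,
          lintegral_prod _ hF.aemeasurable]
    _ = ∫⁻ _ in B, 1 ∂(ν.map Y) := by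
        refine setLIntegral_congr_fun hB fun y _ => ?_
        rw [lintegral_map (f := fun c => F (y, c)) (hF.comp measurable_prodMk_left) hC]
        exact lintegral_ipcwWeight hC (hpos y)
    _ = ν (Y ⁻¹' B) := by rw [setLIntegral_one, Measure.map_apply hY hB]

lemma IndepFun.prodMk_right_of_ae_eq_const {γ : Type*} [MeasurableSpace γ] {C : Ω → ℝ}
    {Y : Ω → β} {Z : Ω → γ} {z : γ} (hind : IndepFun C Y ν) (hZ : ∀ᵐ ω ∂ν, Z ω = z) :
    IndepFun C (fun ω => (Y ω, Z ω)) ν := by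
  have hφ : Measurable fun y : β => (y, z) := measurable_id.prodMk measurable_const
  refine (hind.comp measurable_id hφ).congr .rfl ?_
  filter_upwards [hZ] with ω hω
  simp [hω]

lemma sum_meas_smul_cond_fiber_of_countable [Countable ι] [MeasurableSpace ι]
    [MeasurableSingletonClass ι] {Z : Ω → ι} (hZ : Measurable Z) (μ : Measure Ω)
    [IsFiniteMeasure μ] : Measure.sum (fun z => μ (Z ⁻¹' {z}) • μ[|Z ⁻¹' {z}]) = μ := by
  ext s hs
  have hfibers : Pairwise (Function.onFun Disjoint fun z => Z ⁻¹' {z} ∩ s) :=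
    fun z z' hzz' => ((disjoint_singleton.2 hzz').preimage Z).mono inter_subset_left
      inter_subset_left
  rw [Measure.sum_apply _ hs]
  simp_rw [Measure.smul_apply, smul_eq_mul, mul_comm (μ _),
    cond_mul_eq_inter (hZ (measurableSet_singleton _))]
  rw [← measure_iUnion hfibers fun z => (hZ (measurableSet_singleton z)).inter hs,
    ← iUnion_inter, ← preimage_iUnion, iUnion_of_singleton, preimage_univ, univ_inter]

lemma setLIntegral_eq_measure_of_cond_fiber [Countable ι] [MeasurableSpace ι]
    [MeasurableSingletonClass ι] {μ : Measure Ω} [IsFiniteMeasure μ] {Z : Ω → ι}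
    (hZ : Measurable Z) {f : Ω → ℝ≥0∞} {s : Set Ω} (hs : MeasurableSet s)
    (h : ∀ z, μ (Z ⁻¹' {z}) ≠ 0 → ∫⁻ ω in s, f ω ∂μ[|Z ⁻¹' {z}] = μ[|Z ⁻¹' {z}] s) :
    ∫⁻ ω in s, f ω ∂μ = μ s := by
  rw [← sum_meas_smul_cond_fiber_of_countable hZ μ, Measure.restrict_sum _ hs,
    lintegral_sum_measure, Measure.sum_apply _ hs]
  refine tsum_congr fun z => ?_
  rcases eq_or_ne (μ (Z ⁻¹' {z})) 0 with hz | hz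
  · simp [hz]
  · rw [Measure.restrict_smul, lintegral_smul_measure, Measure.smul_apply, h z hz, smul_eq_mul]

variable [MeasurableSpace ι] [MeasurableSingletonClass ι] {μ : Measure Ω} {C : Ω → ℝ} {Y : Ω → β}
  {Z : Ω → ι} {a : β → ℝ}

theorem setLIntegral_ipcwWeight_cond_fiber (hC : Measurable C) (hY : Measurable Y)
    (hZ : Measurable Z) (ha : Measurable a) {z : ι} (hind : IndepFun C Y μ[|Z ⁻¹' {z}]) (hpos : ∀ y, μ[{ω | a y ≤ C ω} | Z ⁻¹' {z}] ≠ 0)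
    {B : Set (β × ι)} (hB : MeasurableSet B) :
    ∫⁻ ω in (fun ω => (Y ω, Z ω)) ⁻¹' B, ipcwWeight μ[|Z ⁻¹' {Z ω}] C (a (Y ω)) (C ω)
      ∂μ[|Z ⁻¹' {z}] = μ[(fun ω => (Y ω, Z ω)) ⁻¹' B | Z ⁻¹' {z}] := by
  have hZz : ∀ᵐ ω ∂μ[|Z ⁻¹' {z}], Z ω = z := ae_cond_mem (hZ (measurableSet_singleton z))
  rw [← setLIntegral_ipcwWeight hC (hY.prodMk hZ) (hind.prodMk_right_of_ae_eq_const hZz)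
    (ha.comp measurable_fst) (fun p => hpos p.1) hB]
  refine setLIntegral_congr_fun_ae ((hY.prodMk hZ) hB) ?_
  filter_upwards [hZz] with ω hω _
  rw [hω, Function.comp_apply]

theorem setLIntegral_ipcwWeight_stratified [Countable ι] [IsFiniteMeasure μ] (hC : Measurable C)
    (hY : Measurable Y) (hZ : Measurable Z) (ha : Measurable a)
    (hind : ∀ z, μ (Z ⁻¹' {z}) ≠ 0 → IndepFun C Y μ[|Z ⁻¹' {z}])
    (hpos : ∀ z, μ (Z ⁻¹' {z}) ≠ 0 → ∀ y, μ[{ω | a y ≤ C ω} | Z ⁻¹' {z}] ≠ 0)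
    {B : Set (β × ι)} (hB : MeasurableSet B) :
    ∫⁻ ω in (fun ω => (Y ω, Z ω)) ⁻¹' B, ipcwWeight μ[|Z ⁻¹' {Z ω}] C (a (Y ω)) (C ω) ∂μ =
      μ ((fun ω => (Y ω, Z ω)) ⁻¹' B) :=
  setLIntegral_eq_measure_of_cond_fiber hZ ((hY.prodMk hZ) hB) fun z hz =>
    setLIntegral_ipcwWeight_cond_fiber hC hY hZ ha (hind z hz) (hpos z hz) hB

end ProbabilityTheory

namespace MeasureTheory

variable {Ω : Type*} {m m₀ : MeasurableSpace Ω} {μ : Measure[m₀] Ω} [IsFiniteMeasure μ]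

lemma condExp_toReal_ae_eq_one_of_setLIntegral_eq (hm : m ≤ m₀) {W : Ω → ℝ≥0∞}
    (hW : AEMeasurable W μ) (h : ∀ s, MeasurableSet[m] s → ∫⁻ ω in s, W ω ∂μ = μ s) :
    μ[fun ω => (W ω).toReal | m] =ᵐ[μ] fun _ => (1 : ℝ) := by
  have htot : ∫⁻ ω, W ω ∂μ ≠ ∞ := by
    rw [← setLIntegral_univ, h univ .univ]
    exact measure_ne_top μ univ
  refine (ae_eq_condExp_of_forall_setIntegral_eq hm (integrable_toReal_of_lintegral_ne_top hW htot)
    (fun s _ hμs => integrableOn_const hμs.ne) (fun s hs _ => ?_)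
    aestronglyMeasurable_const).symm
  rw [integral_toReal hW.restrict (ae_restrict_of_ae (ae_lt_top' hW htot)), h s hs,
    setIntegral_const, smul_eq_mul, mul_one, Measure.real]

end MeasureTheory

theorem ipcw_weight_cond_exp_one_general
    {Ω E F : Type*} [MeasurableSpace Ω] [MeasurableSpace E] [MeasurableSpace F]
    {ι : Type*} [MeasurableSpace ι] [MeasurableSingletonClass ι] [Countable ι]
    (μ : Measure Ω) [IsProbabilityMeasure μ]
    (C T : Ω → ℝ) (D : Ω → E) (X : Ω → F) (Z : Ω → ι)
    (hC : Measurable C) (hT : Measurable T) (hD : Measurable D)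
    (hX : Measurable X) (hZ : Measurable Z)
    (t : ℝ)
    -- conditional independence given Z: within each stratum of positive probability,
    -- C is independent of (T, D, X)
    (hindep : ∀ z : ι, 0 < μ (Z ⁻¹' {z}) →
      IndepFun C (fun ω => (T ω, D ω, X ω)) (μ[|Z ⁻¹' {z}]))
    -- positivity: G(t-|z) = P(C ≥ t | Z = z) > 0 on the support of Z
    (hpos : ∀ z : ι, 0 < μ (Z ⁻¹' {z}) → 0 < (μ[|Z ⁻¹' {z}]) {ω | t ≤ C ω}) :
    μ[(fun ω =>
        (if min (T ω) t ≤ C ω then (1 : ℝ) else 0) /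
          ((μ[|Z ⁻¹' {Z ω}]) {ω' | min (T ω) t ≤ C ω'}).toReal)
      | MeasurableSpace.comap (fun ω => (T ω, D ω, X ω, Z ω)) inferInstance]
      =ᵐ[μ] fun _ => (1 : ℝ) := by
  set V : Ω → ℝ × E × F × ι := fun ω => (T ω, D ω, X ω, Z ω)
  have hV : Measurable V := hT.prodMk (hD.prodMk (hX.prodMk hZ))
  set W : Ω → ℝ≥0∞ := fun ω => ipcwWeight (μ[|Z ⁻¹' {Z ω}]) C (min (T ω) t) (C ω)
  have hW : Measurable W := by
    have hG : Measurable fun p : ι × ℝ × ℝ => ipcwWeight (μ[|Z ⁻¹' {p.1}]) C p.2.1 p.2.2 :=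
      measurable_from_prod_countable_right fun z => measurable_ipcwWeight (μ[|Z ⁻¹' {z}]) C
    exact hG.comp (hZ.prodMk ((hT.min measurable_const).prodMk hC))
  have hWreal : (fun ω => (if min (T ω) t ≤ C ω then (1 : ℝ) else 0) /
      ((μ[|Z ⁻¹' {Z ω}]) {ω' | min (T ω) t ≤ C ω'}).toReal) = fun ω => (W ω).toReal := by
    ext ω
    simp only [W, ipcwWeight]
    split_ifs <;> simp
  rw [hWreal]
  refine condExp_toReal_ae_eq_one_of_setLIntegral_eq hV.comap_le hW.aemeasurable ?_
  rintro _ ⟨A, hA, rfl⟩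
  have hposY : ∀ z, μ (Z ⁻¹' {z}) ≠ 0 →
      ∀ y : ℝ × E × F, μ[{ω | min y.1 t ≤ C ω} | Z ⁻¹' {z}] ≠ 0 :=
    fun z hz y => ((hpos z hz.bot_lt).trans_le
      (measure_mono fun ω (hω : t ≤ C ω) => (min_le_right y.1 t).trans hω)).ne'
  -- `V` is `((T, D, X), Z)` up to reassociating the product
  exact setLIntegral_ipcwWeight_stratified hC (hT.prodMk (hD.prodMk hX)) hZ
    (measurable_fst.min measurable_const) (fun z hz => hindep z hz.bot_lt) hposY
    ((by fun_prop : Measurable fun p : (ℝ × E × F) × ι => (p.1.1, p.1.2.1, p.1.2.2, p.2)) hA)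

/-- With `C ⟂ (T,D,X) | Z` (Z discrete) and `G(t-|z) = P(C ≥ t | Z=z) > 0`
on the support of `Z`, the IPC weight `W = 1{C ≥ T∧t} / G((T∧t)-|Z)` satisfies
`E(W | T, D, X, Z) = 1` a.s. -/
theorem ipcw_weight_cond_exp_one
    {Ω E F : Type*} [MeasurableSpace Ω] [MeasurableSpace E] [MeasurableSpace F]
    {ι : Type*} [MeasurableSpace ι] [MeasurableSingletonClass ι] [Countable ι]
    (μ : Measure Ω) [IsProbabilityMeasure μ]
    (C T : Ω → ℝ) (D : Ω → E) (X : Ω → F) (Z : Ω → ι)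
    (hC : Measurable C) (hT : Measurable T) (hD : Measurable D)
    (hX : Measurable X) (hZ : Measurable Z)
    (hCpos : ∀ ω, 0 < C ω) (hTpos : ∀ ω, 0 < T ω)
    (t : ℝ) (ht : 0 < t)
    -- conditional independence given Z: within each stratum of positive probability,
    -- C is independent of (T, D, X)
    (hindep : ∀ z : ι, 0 < μ (Z ⁻¹' {z}) →
      IndepFun C (fun ω => (T ω, D ω, X ω)) (μ[|Z ⁻¹' {z}]))
    -- positivity: G(t-|z) = P(C ≥ t | Z = z) > 0 on the support of Z
    (hpos : ∀ z : ι, 0 < μ (Z ⁻¹' {z}) → 0 < (μ[|Z ⁻¹' {z}]) {ω | t ≤ C ω}) :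
    μ[(fun ω =>
        (if min (T ω) t ≤ C ω then (1 : ℝ) else 0) /
          ((μ[|Z ⁻¹' {Z ω}]) {ω' | min (T ω) t ≤ C ω'}).toReal)
      | MeasurableSpace.comap (fun ω => (T ω, D ω, X ω, Z ω)) inferInstance]
      =ᵐ[μ] fun _ => (1 : ℝ) :=
  ipcw_weight_cond_exp_one_general μ C T D X Z hC hT hD hX hZ t hindep hpos
end

section
/- Let C be a nonnegative random variable with survival function G, cumulative hazard Λ(s) = ∫_0^s G(u-)^{-1} dF0(u), and let T ∧ t be a (possibly random) time with G((T∧t)-) > 0. Define the counting-process martingale increment M(ds) = d1{C ≤ s} - 1{C ≥ s} dΛ(s), and W* = 1{C ≥ T∧t}/G((T∧t)-). Then, pathwise, W* - 1 = -∫_{[0, T∧t)} (1/G(s)) M(ds), where the integral is over [0, t) restricted by the indicator 1{T > s} (i.e. over s < T ∧ t). -/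
/-!
Write `G s = μ (Ioi s)` and `G (s-) = μ (Ici s)`. Everything reduces to the Stieltjes chain rule
`d(1/G)(s) = dF(s) / (G(s) G(s-))`, integrated over `[a, b)`:
`∫_{[a,b)} dF / (G G₋) = 1/G(b-) - 1/G(a-)` whenever `G(b-) > 0`.
On a piece `[x, y)` the atom at `x` contributes exactly `1/G(x) - 1/G(x-)`, while on `(x, y)` the
integral and the increment `1/G(y-) - 1/G(x)` both lie between `μ(x,y)/G(x)²` and `μ(x,y)/G(y-)²`.
So the defect `D` of the identity satisfies `|D y - D x| ≤ μ(x,y) (B y - B x)` with `B = 1/G(·-)²`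
monotone. Since `μ(x,y) → 0` as `y ↓ x` or `x ↑ y`, `D - εB` and `-D - εB` are locally
antitone, hence antitone, for every `ε > 0`; so `D` is constant, and `D a = 0`.
As `G(0-) = 1`, for `C < T ∧ t` the compensator integrates over `[0, C]` (atom at `C` included)
to `1/G(C) - 1`, against the jump `1/G(C)`; for `C ≥ T ∧ t` it integrates over `[0, T ∧ t)` to
`1/G((T ∧ t)-) - 1`.
-/

open MeasureTheory Set Filter Topology

section LocallyAntitone

variable {α : Type*} [ConditionallyCompleteLinearOrder α] [TopologicalSpace α] [OrderTopology α]
  [DenselyOrdered α] {a b : α}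

theorem apply_le_apply_of_locally_antitone {β : Type*} [Preorder β] {f : α → β} (hab : a ≤ b)
    (hright : ∀ x ∈ Ico a b, ∀ᶠ y in 𝓝[>] x, f y ≤ f x)
    (hleft : ∀ x ∈ Ioc a b, ∀ᶠ y in 𝓝[<] x, f x ≤ f y) : f b ≤ f a := by
  set S := {z ∈ Icc a b | f z ≤ f a}
  have ha : a ∈ S := ⟨left_mem_Icc.2 hab, le_rfl⟩
  have hbdd : BddAbove S := ⟨b, fun z hz => hz.1.2⟩
  set s := sSup S
  have has : a ≤ s := le_csSup hbdd ha
  have hsb : s ≤ b := csSup_le ⟨a, ha⟩ fun z hz => hz.1.2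
  have hs : f s ≤ f a := by
    rcases has.eq_or_lt with has | has
    · rw [← has]
    obtain ⟨l, hl, hls⟩ := (mem_nhdsLT_iff_exists_Ioo_subset' has).1 (hleft s ⟨has, hsb⟩)
    obtain ⟨z, hzS, hlz⟩ := exists_lt_of_lt_csSup ⟨a, ha⟩ hl
    rcases (le_csSup hbdd hzS).lt_or_eq with hzs | hzs
    · exact (hls ⟨hlz, hzs⟩).trans hzS.2
    · rw [show s = z from hzs.symm]
      exact hzS.2
  rcases hsb.eq_or_lt with hsb | hsb
  · exact hsb ▸ hs
  obtain ⟨u, hu, hsu⟩ := (mem_nhdsGT_iff_exists_Ioo_subset' hsb).1 (hright s ⟨has, hsb⟩)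
  obtain ⟨y, hsy, hyu⟩ := exists_between (lt_min hu hsb)
  have hyS : y ∈ S :=
    ⟨⟨has.trans hsy.le, hyu.le.trans (min_le_right _ _)⟩,
      (hsu ⟨hsy, hyu.trans_le (min_le_left _ _)⟩).trans hs⟩
  exact absurd (le_csSup hbdd hyS) (not_le.2 hsy)

theorem eq_of_abs_sub_le_mul_sub {D B : α → ℝ} {m : α → α → ℝ} (hab : a ≤ b)
    (hB : MonotoneOn B (Icc a b))
    (hD : ∀ x ∈ Icc a b, ∀ y ∈ Icc a b, x < y → |D y - D x| ≤ m x y * (B y - B x))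
    (hright : ∀ x ∈ Ico a b, Tendsto (m x) (𝓝[>] x) (𝓝 0))
    (hleft : ∀ x ∈ Ioc a b, Tendsto (fun y => m y x) (𝓝[<] x) (𝓝 0)) : D b = D a := by
  suffices h : ∀ D : α → ℝ,
      (∀ x ∈ Icc a b, ∀ y ∈ Icc a b, x < y → |D y - D x| ≤ m x y * (B y - B x)) → D b ≤ D a by
    refine le_antisymm (h D hD) (neg_le_neg_iff.1 (h (-D) fun x hx y hy hxy => ?_))
    simpa only [Pi.neg_apply, neg_sub_neg, abs_sub_comm] using hD x hx y hy hxy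
  intro D hD
  have hsmall : ∀ ε > 0, D b - ε * B b ≤ D a - ε * B a := by
    intro ε hε
    have hstep : ∀ x ∈ Icc a b, ∀ y ∈ Icc a b, x < y → m x y ≤ ε →
        D y - ε * B y ≤ D x - ε * B x := by
      intro x hx y hy hxy hm
      have hBxy : 0 ≤ B y - B x := sub_nonneg.2 (hB hx hy hxy.le)
      have := (le_abs_self _).trans
        ((hD x hx y hy hxy).trans (mul_le_mul_of_nonneg_right hm hBxy))
      linarith
    refine apply_le_apply_of_locally_antitone (f := fun z => D z - ε * B z) hab
      (fun x hx => ?_) (fun x hx => ?_)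
    · filter_upwards [Ioo_mem_nhdsGT hx.2, (hright x hx).eventually_le_const hε] with y hy hmy
      exact hstep x (Ico_subset_Icc_self hx) y ⟨hx.1.trans hy.1.le, hy.2.le⟩ hy.1 hmy
    · filter_upwards [Ioo_mem_nhdsLT hx.1, (hleft x hx).eventually_le_const hε] with y hy hmy
      exact hstep y ⟨hy.1.le, hy.2.le.trans hx.2⟩ x (Ioc_subset_Icc_self hx) hy.2 hmy
  have hK : 0 ≤ B b - B a := sub_nonneg.2 (hB (left_mem_Icc.2 hab) (right_mem_Icc.2 hab) hab)
  refine le_of_forall_pos_le_add fun ε hε => ?_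
  have h := hsmall (ε / (B b - B a + 1)) (by positivity)
  have : ε / (B b - B a + 1) * (B b - B a) ≤ ε := by
    rw [div_mul_eq_mul_div, div_le_iff₀ (by positivity)]
    nlinarith
  linarith

end LocallyAntitone

section MeasureIoo

variable {α : Type*} [LinearOrder α] [TopologicalSpace α] [OrderTopology α]
  [FirstCountableTopology α] [MeasurableSpace α] [OpensMeasurableSpace α]
  (μ : Measure α) [IsFiniteMeasure μ]

theorem tendsto_measure_Ioo_nhdsGT [NoMaxOrder α] (x : α) :
    Tendsto (fun y => μ (Ioo x y)) (𝓝[>] x) (𝓝 0) := by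
  have h := tendsto_measure_biInter_gt (μ := μ) (s := fun y => Ioo x y) (a := x)
    (fun _ _ => measurableSet_Ioo.nullMeasurableSet) (fun _ _ _ hij => Ioo_subset_Ioo_right hij)
    ((exists_gt x).imp fun _ h => ⟨h, measure_ne_top μ _⟩)
  have hempty : ⋂ r > x, Ioo x r = ∅ := by
    refine eq_empty_of_forall_notMem fun y hy => ?_
    obtain ⟨r, hr⟩ := exists_gt x
    exact (mem_iInter₂.1 hy y (mem_iInter₂.1 hy r hr).1).2.false
  rwa [hempty, measure_empty] at h

theorem tendsto_measure_Ioo_nhdsLT [NoMinOrder α] (x : α) :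
    Tendsto (fun y => μ (Ioo y x)) (𝓝[<] x) (𝓝 0) := by
  have h := tendsto_measure_biInter_gt (μ := μ) (ι := αᵒᵈ)
    (s := fun y => Ioo (OrderDual.ofDual y) x) (a := OrderDual.toDual x)
    (fun _ _ => measurableSet_Ioo.nullMeasurableSet) (fun _ _ _ hij => Ioo_subset_Ioo_left hij)
    ((exists_lt x).imp fun _ h => ⟨h, measure_ne_top μ _⟩)
  have hempty : ⋂ r > OrderDual.toDual x, Ioo (OrderDual.ofDual r) x = ∅ := by
    refine eq_empty_of_forall_notMem fun y hy => ?_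
    obtain ⟨r, hr⟩ := exists_lt x
    exact (mem_iInter₂.1 hy y (mem_iInter₂.1 hy (OrderDual.toDual r) hr).2).1.false
  rwa [hempty, measure_empty] at h

end MeasureIoo

/-- The density of `d(1/G)`, and of `dΛ(s) / G(s)`, with respect to `μ`. -/
noncomputable def invSurvivalDensity (μ : Measure ℝ) (s : ℝ) : ℝ :=
  (μ.real (Ioi s) * μ.real (Ici s))⁻¹

namespace invSurvivalDensity

variable {μ : Measure ℝ}

theorem nonneg (s : ℝ) : 0 ≤ invSurvivalDensity μ s := by
  unfold invSurvivalDensity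
  positivity

variable [IsFiniteMeasure μ]

theorem measurable : Measurable (invSurvivalDensity μ) := by
  have hIoi : Antitone fun s => μ.real (Ioi s) :=
    fun _ _ h => measureReal_mono (Ioi_subset_Ioi h)
  have hIci : Antitone fun s => μ.real (Ici s) :=
    fun _ _ h => measureReal_mono (Ici_subset_Ici.2 h)
  exact (hIoi.measurable.mul hIci.measurable).inv

theorem le_inv_sq {s y : ℝ} (hsy : s < y) (hy : 0 < μ.real (Ici y)) :
    invSurvivalDensity μ s ≤ (μ.real (Ici y))⁻¹ ^ 2 := by
  have hIoi : μ.real (Ici y) ≤ μ.real (Ioi s) := measureReal_mono (Ici_subset_Ioi.2 hsy)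
  have hIci : μ.real (Ioi s) ≤ μ.real (Ici s) := measureReal_mono Ioi_subset_Ici_self
  rw [invSurvivalDensity, inv_pow, sq]
  exact inv_anti₀ (by positivity) (mul_le_mul hIoi (hIoi.trans hIci) hy.le (by positivity))

theorem inv_sq_le {x s : ℝ} (hxs : x < s) (hs : 0 < μ.real (Ioi s)) :
    (μ.real (Ioi x))⁻¹ ^ 2 ≤ invSurvivalDensity μ s := by
  have hIoi : μ.real (Ioi s) ≤ μ.real (Ioi x) := measureReal_mono (Ioi_subset_Ioi hxs.le)
  have hIci : μ.real (Ici s) ≤ μ.real (Ioi x) := measureReal_mono (Ici_subset_Ioi.2 hxs)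
  have hs' : 0 < μ.real (Ici s) := hs.trans_le (measureReal_mono Ioi_subset_Ici_self)
  rw [invSurvivalDensity, inv_pow, sq]
  exact inv_anti₀ (mul_pos hs hs') (mul_le_mul hIoi hIci hs'.le (hs.le.trans hIoi))

theorem integrableOn_Ico (a : ℝ) {b : ℝ} (hb : 0 < μ.real (Ici b)) :
    IntegrableOn (invSurvivalDensity μ) (Ico a b) μ := by
  refine Measure.integrableOn_of_bounded (M := (μ.real (Ici b))⁻¹ ^ 2) (measure_ne_top μ _)
    measurable.aestronglyMeasurable ((ae_restrict_iff' measurableSet_Ico).2 ?_)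
  refine Eventually.of_forall fun s hs => ?_
  rw [Real.norm_of_nonneg (nonneg s)]
  exact le_inv_sq hs.2 hb

theorem setIntegral_singleton {x : ℝ} (hx : 0 < μ.real (Ioi x)) :
    ∫ s in {x}, invSurvivalDensity μ s ∂μ = (μ.real (Ioi x))⁻¹ - (μ.real (Ici x))⁻¹ := by
  have hIci : μ.real (Ici x) = μ.real (Ioi x) + μ.real {x} := by
    rw [← Ioi_union_left, measureReal_union (μ := μ) (by simp) (measurableSet_singleton x)]
  rw [integral_singleton, invSurvivalDensity, smul_eq_mul, hIci]
  have : 0 < μ.real (Ioi x) + μ.real {x} := by positivity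
  field_simp
  ring

theorem abs_setIntegral_Ioo_sub_le {x y : ℝ} (hxy : x < y) (hy : 0 < μ.real (Ici y)) :
    |∫ s in Ioo x y, invSurvivalDensity μ s ∂μ - ((μ.real (Ici y))⁻¹ - (μ.real (Ioi x))⁻¹)| ≤
      μ.real (Ioo x y) * ((μ.real (Ici y))⁻¹ ^ 2 - (μ.real (Ioi x))⁻¹ ^ 2) := by
  have hsplit : μ.real (Ioi x) = μ.real (Ioo x y) + μ.real (Ici y) := by
    rw [← Ioo_union_Ici_eq_Ioi hxy, measureReal_union (μ := μ)
      ((Iio_disjoint_Ici le_rfl).mono_left Ioo_subset_Iio_self) measurableSet_Ici]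
  have hint : IntegrableOn (invSurvivalDensity μ) (Ioo x y) μ :=
    (integrableOn_Ico x hy).mono_set Ioo_subset_Ico_self
  have hlower : μ.real (Ioo x y) * (μ.real (Ioi x))⁻¹ ^ 2 ≤
      ∫ s in Ioo x y, invSurvivalDensity μ s ∂μ := by
    rw [← smul_eq_mul, ← setIntegral_const]
    exact setIntegral_mono_on (integrableOn_const (measure_ne_top μ _)) hint measurableSet_Ioo
      fun s hs => inv_sq_le hs.1 (hy.trans_le (measureReal_mono (Ici_subset_Ioi.2 hs.2)))
  have hupper : ∫ s in Ioo x y, invSurvivalDensity μ s ∂μ ≤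
      μ.real (Ioo x y) * (μ.real (Ici y))⁻¹ ^ 2 := by
    rw [← smul_eq_mul, ← setIntegral_const]
    exact setIntegral_mono_on hint (integrableOn_const (measure_ne_top μ _)) measurableSet_Ioo
      fun s hs => le_inv_sq hs.2 hy
  have hexact : (μ.real (Ici y))⁻¹ - (μ.real (Ioi x))⁻¹ =
      μ.real (Ioo x y) * ((μ.real (Ici y))⁻¹ * (μ.real (Ioi x))⁻¹) := by
    have : 0 < μ.real (Ioi x) := hsplit ▸ add_pos_of_nonneg_of_pos measureReal_nonneg hy
    rw [hsplit] at this ⊢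
    field_simp
    ring
  have hinv : (μ.real (Ioi x))⁻¹ ≤ (μ.real (Ici y))⁻¹ :=
    inv_anti₀ hy (measureReal_mono (Ici_subset_Ioi.2 hxy))
  have hm : 0 ≤ μ.real (Ioo x y) := measureReal_nonneg
  have hv : 0 ≤ (μ.real (Ioi x))⁻¹ := by positivity
  rw [hexact, abs_sub_le_iff]
  constructor <;> nlinarith [mul_nonneg hm (mul_nonneg hv (sub_nonneg.2 hinv)),
    mul_nonneg hm (mul_nonneg (hv.trans hinv) (sub_nonneg.2 hinv))]

theorem abs_setIntegral_Ico_sub_le {x y : ℝ} (hxy : x < y) (hy : 0 < μ.real (Ici y)) :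
    |∫ s in Ico x y, invSurvivalDensity μ s ∂μ - ((μ.real (Ici y))⁻¹ - (μ.real (Ici x))⁻¹)| ≤
      μ.real (Ioo x y) * ((μ.real (Ici y))⁻¹ ^ 2 - (μ.real (Ici x))⁻¹ ^ 2) := by
  have hx : 0 < μ.real (Ioi x) := hy.trans_le (measureReal_mono (Ici_subset_Ioi.2 hxy))
  have hint : IntegrableOn (invSurvivalDensity μ) (Ico x y) μ := integrableOn_Ico x hy
  rw [← Ioo_union_left hxy] at hint ⊢
  rw [setIntegral_union (by simp) (measurableSet_singleton x) (hint.mono_set subset_union_left)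
    (hint.mono_set subset_union_right), setIntegral_singleton hx]
  have hinv : (μ.real (Ici x))⁻¹ ^ 2 ≤ (μ.real (Ioi x))⁻¹ ^ 2 :=
    pow_le_pow_left₀ (by positivity) (inv_anti₀ hx (measureReal_mono Ioi_subset_Ici_self)) 2
  calc _ = |∫ s in Ioo x y, invSurvivalDensity μ s ∂μ -
          ((μ.real (Ici y))⁻¹ - (μ.real (Ioi x))⁻¹)| := by
        ring_nf
    _ ≤ μ.real (Ioo x y) * ((μ.real (Ici y))⁻¹ ^ 2 - (μ.real (Ioi x))⁻¹ ^ 2) :=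
        abs_setIntegral_Ioo_sub_le hxy hy
    _ ≤ _ := by gcongr

theorem setIntegral_Ico {a b : ℝ} (hab : a ≤ b) (hb : 0 < μ.real (Ici b)) :
    ∫ s in Ico a b, invSurvivalDensity μ s ∂μ = (μ.real (Ici b))⁻¹ - (μ.real (Ici a))⁻¹ := by
  have hpos : ∀ z ≤ b, 0 < μ.real (Ici z) :=
    fun z hz => hb.trans_le (measureReal_mono (Ici_subset_Ici.2 hz))
  set D : ℝ → ℝ := fun z =>
    ∫ s in Ico a z, invSurvivalDensity μ s ∂μ - ((μ.real (Ici z))⁻¹ - (μ.real (Ici a))⁻¹)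
  have hD : ∀ x ∈ Icc a b, ∀ y ∈ Icc a b, x < y → |D y - D x| ≤
      μ.real (Ioo x y) * ((μ.real (Ici y))⁻¹ ^ 2 - (μ.real (Ici x))⁻¹ ^ 2) := by
    intro x hx y hy hxy
    have hunion : ∫ s in Ico a y, invSurvivalDensity μ s ∂μ =
        ∫ s in Ico a x, invSurvivalDensity μ s ∂μ +
          ∫ s in Ico x y, invSurvivalDensity μ s ∂μ := by
      rw [← Ico_union_Ico_eq_Ico hx.1 hxy.le, setIntegral_union Ico_disjoint_Ico_same
        measurableSet_Ico (integrableOn_Ico a (hpos x hx.2)) (integrableOn_Ico x (hpos y hy.2))]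
    convert abs_setIntegral_Ico_sub_le hxy (hpos y hy.2) using 2
    simp only [D, hunion]
    ring
  have hB : MonotoneOn (fun z => (μ.real (Ici z))⁻¹ ^ 2) (Icc a b) := fun _ _ y hy hxy =>
    pow_le_pow_left₀ (inv_nonneg.2 measureReal_nonneg)
      (inv_anti₀ (hpos y hy.2) (measureReal_mono (Ici_subset_Ici.2 hxy))) 2
  have hDb := eq_of_abs_sub_le_mul_sub hab hB hD
    (fun x _ => (ENNReal.tendsto_toReal_zero_iff fun _ => measure_ne_top μ _).2
      (tendsto_measure_Ioo_nhdsGT μ x))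
    (fun x _ => (ENNReal.tendsto_toReal_zero_iff fun _ => measure_ne_top μ _).2
      (tendsto_measure_Ioo_nhdsLT μ x))
  simpa [D, sub_eq_zero] using hDb

theorem setIntegral_Icc {a b : ℝ} (hab : a ≤ b) (hb : 0 < μ.real (Ioi b)) :
    ∫ s in Icc a b, invSurvivalDensity μ s ∂μ = (μ.real (Ioi b))⁻¹ - (μ.real (Ici a))⁻¹ := by
  have hb' : 0 < μ.real (Ici b) := hb.trans_le (measureReal_mono Ioi_subset_Ici_self)
  rw [← Ico_union_right hab, setIntegral_union (by simp) (measurableSet_singleton b)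
    (integrableOn_Ico a hb') integrableOn_singleton, setIntegral_Ico hab hb',
    setIntegral_singleton hb]
  ring

end invSurvivalDensity

theorem setIntegral_withDensity_inv_measure_Ici (μ : Measure ℝ) {A : Set ℝ}
    (hA : MeasurableSet A) (hApos : ∀ u ∈ A, μ (Ici u) ≠ 0) (c : ℝ) :
    ∫ s in A, (if s ≤ c then (μ.real (Ioi s))⁻¹ else 0) ∂(μ.withDensity fun u => (μ (Ici u))⁻¹) =
      ∫ s in A ∩ Iic c, invSurvivalDensity μ s ∂μ := by
  have hmeas : Measurable fun u => (μ (Ici u))⁻¹ :=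
    (Antitone.measurable fun _ _ h => measure_mono (Ici_subset_Ici.2 h)).inv
  rw [setIntegral_withDensity_eq_setIntegral_toReal_smul hmeas (ae_restrict_of_forall_mem hA
      fun u hu => ENNReal.inv_lt_top.2 (pos_iff_ne_zero.2 (hApos u hu))) _ hA,
    ← setIntegral_indicator measurableSet_Iic]
  refine setIntegral_congr_fun hA fun s _ => ?_
  by_cases hs : s ≤ c <;>
    simp [hs, invSurvivalDensity, ENNReal.toReal_inv, measureReal_def, mul_comm]

/-- Pathwise identity `W* - 1 = -∫_{[0, T∧t)} G(s)⁻¹ M(ds)` where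
`M(ds) = d1{C ≤ s} - 1{C ≥ s} dΛ(s)`, `Λ` the cumulative hazard measure
`dΛ(u) = G(u-)⁻¹ dF0(u)`, `W* = 1{C ≥ T∧t}/G((T∧t)-)`, valid whenever `G((T∧t)-) > 0`.
The jump part of the integral equals `G(c)⁻¹` if `c = C(ω) ∈ [0, T∧t)`. -/
theorem ipcw_weight_martingale_representation
    (μ : Measure ℝ) [IsProbabilityMeasure μ] (hnonneg : μ (Set.Iio 0) = 0)
    (t : ℝ) (ht : 0 < t) (c T : ℝ) (hc : 0 ≤ c) (hT : 0 < T)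
    (hpos : 0 < μ (Set.Ici (min T t))) :
    (if min T t ≤ c then (1 : ℝ) else 0) / (μ (Set.Ici (min T t))).toReal - 1 =
      -((if c < min T t then ((μ (Set.Ioi c)).toReal)⁻¹ else 0) -
        ∫ s in Set.Ico 0 (min T t),
          (if s ≤ c then ((μ (Set.Ioi s)).toReal)⁻¹ else 0)
            ∂(μ.withDensity fun u => (μ (Set.Ici u))⁻¹)) := by
  have hm : 0 < min T t := lt_min hT ht
  set m := min T t
  have hG0 : μ.real (Ici 0) = 1 := by
    rw [measureReal_def, ← compl_Iio, (prob_compl_eq_one_iff measurableSet_Iio).2 hnonneg,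
      ENNReal.toReal_one]
  have hGm : 0 < μ.real (Ici m) := ENNReal.toReal_pos hpos.ne' (measure_ne_top μ _)
  simp only [← measureReal_def]
  rw [setIntegral_withDensity_inv_measure_Ici μ measurableSet_Ico
    fun u hu => (hpos.trans_le (measure_mono (Ici_subset_Ici.2 hu.2.le))).ne']
  rcases lt_or_ge c m with hcm | hmc
  · have hGc : 0 < μ.real (Ioi c) := hGm.trans_le (measureReal_mono (Ici_subset_Ioi.2 hcm))
    have hset : Ico 0 m ∩ Iic c = Icc 0 c := by
      ext s
      simp only [mem_inter_iff, mem_Ico, mem_Iic, mem_Icc]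
      grind
    rw [if_neg (not_le.2 hcm), if_pos hcm, hset, invSurvivalDensity.setIntegral_Icc hc hGc, hG0]
    ring
  · rw [if_pos hmc, if_neg (not_lt.2 hmc), inter_eq_left.2 fun s hs => hs.2.le.trans hmc,
      invSurvivalDensity.setIntegral_Ico hm.le hGm, hG0]
    ring
end

section
/- With the setup of the two-group uniform example (X Bernoulli(1/2), T | X=1 ~ U[0,1/p], T | X=0 ~ U[0,1/q], p,q ∈ (0,1), Y = 1{T ≤ 1}), define for s ∈ (0,1): f1(s) = (p+q)(1-s)/(2-ps-qs), f2(s) = (p(1-s)/(1-ps) - f1(s))·(1-ps)/(2-ps-qs), f3(s) = p(1-s)(1-qs)/(2-ps-qs)^2, f4(s) = (1-ps)(1-qs)/(2-ps-qs)^2. Then 16·f1(s)·(f1(s)f4(s) - 2f3(s) + f2(s)) = -16·((p+q)(1-s)/(2-ps-qs))·( q(1-s)(1-ps)^2/(2-ps-qs)^3 + p(1-s)(1-qs)^2/(2-ps-qs)^3 ), and in particular this quantity is strictly negative for all s ∈ (0,1). -/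
/-- `f1(s) = E(Y | T > s)` in the two-group uniform example. -/
noncomputable def exF1 (p q s : ℝ) : ℝ := (p + q) * (1 - s) / (2 - p*s - q*s)

/-- `f2(s) = Cov(Y, X | T > s)`. -/
noncomputable def exF2 (p q s : ℝ) : ℝ :=
  (p * (1 - s) / (1 - p*s) - exF1 p q s) * (1 - p*s) / (2 - p*s - q*s)

/-- `f3(s) = Cov(YX, X | T > s)`. -/
noncomputable def exF3 (p q s : ℝ) : ℝ :=
  p * (1 - s) * (1 - q*s) / (2 - p*s - q*s)^2

/-- `f4(s) = Var(X | T > s)`. -/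
noncomputable def exF4 (p q s : ℝ) : ℝ :=
  (1 - p*s) * (1 - q*s) / (2 - p*s - q*s)^2

set_option maxHeartbeats 1600000 in
lemma pse_key (p q s : ℝ) (hps : (1:ℝ) - p*s ≠ 0) (hD : (2:ℝ) - p*s - q*s ≠ 0) :
    16 * exF1 p q s * (exF1 p q s * exF4 p q s - 2 * exF3 p q s + exF2 p q s)
      = -16 * ((p + q) * (1 - s) / (2 - p*s - q*s)) *
          (q * (1 - s) * (1 - p*s)^2 / (2 - p*s - q*s)^3 +
           p * (1 - s) * (1 - q*s)^2 / (2 - p*s - q*s)^3) := by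
  simp only [exF1, exF2, exF3, exF4]
  field_simp
  ring

/-- The identity and strict negativity. -/
theorem pse_vs_out_slope_difference (p q : ℝ)
    (hp : p ∈ Set.Ioo (0:ℝ) 1) (hq : q ∈ Set.Ioo (0:ℝ) 1)
    (s : ℝ) (hs : s ∈ Set.Ioo (0:ℝ) 1) :
    (16 * exF1 p q s * (exF1 p q s * exF4 p q s - 2 * exF3 p q s + exF2 p q s)
      = -16 * ((p + q) * (1 - s) / (2 - p*s - q*s)) *
          (q * (1 - s) * (1 - p*s)^2 / (2 - p*s - q*s)^3 +
           p * (1 - s) * (1 - q*s)^2 / (2 - p*s - q*s)^3)) ∧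
    16 * exF1 p q s * (exF1 p q s * exF4 p q s - 2 * exF3 p q s + exF2 p q s) < 0 := by
  obtain ⟨hp0, hp1⟩ := hp
  obtain ⟨hq0, hq1⟩ := hq
  obtain ⟨hs0, hs1⟩ := hs
  have hps : 1 - p*s > 0 := by nlinarith
  have hqs : 1 - q*s > 0 := by nlinarith
  have hD : 2 - p*s - q*s > 0 := by nlinarith
  have h1s : (0:ℝ) < 1 - s := by linarith
  have hid : 16 * exF1 p q s * (exF1 p q s * exF4 p q s - 2 * exF3 p q s + exF2 p q s)
      = -16 * ((p + q) * (1 - s) / (2 - p*s - q*s)) *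
          (q * (1 - s) * (1 - p*s)^2 / (2 - p*s - q*s)^3 +
           p * (1 - s) * (1 - q*s)^2 / (2 - p*s - q*s)^3) :=
    pse_key p q s hps.ne' hD.ne'
  refine ⟨hid, ?_⟩
  rw [hid]
  have hpq : (0:ℝ) < p + q := by linarith
  have h1 : 0 < q * (1 - s) * (1 - p*s)^2 / (2 - p*s - q*s)^3 := by positivity
  have h2 : 0 < p * (1 - s) * (1 - q*s)^2 / (2 - p*s - q*s)^3 := by positivity
  have h3 : 0 < (p + q) * (1 - s) / (2 - p*s - q*s) := by positivity
  nlinarith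
end

section
/- Let C and (T, D, X) satisfy C ⟂ (T, D, X) | Z for a discrete Z, let G(s|z) = P(C > s | Z = z) with G(t-|z) > 0, and let f be a bounded measurable function of (T, D, X, Z). Define W = 1{C ≥ T∧t}/G((T∧t)-|Z) and T̃ = T ∧ C. Then for every s < t with P(T̃ > s, Z = z) > 0: E( f(T,D,X,Z)·W | T̃ > s, Z = z ) = E( f(T,D,X,Z) | T > s, Z = z ) / G(s | z). -/
open MeasureTheory ProbabilityTheory Set

/-! Conditioning on `Z = z` turns the conditional independence into plain independence of `C`
and `W = (T, D, X)` under `ν = μ[|Z = z]`, and `Z = z` holds `ν`-a.e., so the weight's denominator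
is the survival function `G(u) = ν(C ≥ u)` of `C` under `ν`. Since `s < t`, on `{T > s}` the event
`{C ≥ T ∧ t}` already forces `C > s`, so the numerator is
`E_ν[1{T > s} f · 1{C ≥ T ∧ t} / G(T ∧ t)]`.
Integrating out `C` first (Fubini on the product law of `(W, C)`) replaces the weight by
`P(C ≥ T ∧ t | W) / G(T ∧ t) = 1`. The denominator `ν(T ∧ C > s)` factors by independence
of `T` and `C`. -/

section Independence

variable {Ω α β : Type*} [MeasurableSpace Ω] [MeasurableSpace α] [MeasurableSpace β]
  {ν : Measure Ω}

theorem ProbabilityTheory.IndepFun.integral_comp_eq_integral_integral [IsFiniteMeasure ν]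
    {E : Type*} [NormedAddCommGroup E] [NormedSpace ℝ E] {W : Ω → α} {C : Ω → β}
    (hind : IndepFun W C ν) (hW : Measurable W) (hC : Measurable C)
    {φ : α × β → E} (hφ : Integrable φ ((ν.map W).prod (ν.map C))) :
    ∫ ω, φ (W ω, C ω) ∂ν = ∫ w, ∫ c, φ (w, c) ∂(ν.map C) ∂(ν.map W) := by
  have hmap : ν.map (fun ω ↦ (W ω, C ω)) = (ν.map W).prod (ν.map C) :=
    (indepFun_iff_map_prod_eq_prod_map_map hW.aemeasurable hC.aemeasurable).mp hind
  rw [← integral_prod φ hφ, ← hmap,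
    integral_map (hW.prodMk hC).aemeasurable (hmap ▸ hφ.aestronglyMeasurable)]

theorem ProbabilityTheory.IndepFun.measure_lt_min_eq_mul {T C : Ω → ℝ} (hind : IndepFun T C ν)
    (s : ℝ) :
    ν {ω | s < min (T ω) (C ω)} = ν {ω | s < T ω} * ν {ω | s < C ω} := by
  have hset : {ω | s < min (T ω) (C ω)} = T ⁻¹' Ioi s ∩ C ⁻¹' Ioi s := by
    ext ω; simp
  rw [hset, hind.measure_inter_preimage_eq_mul _ _ measurableSet_Ioi measurableSet_Ioi]
  rfl

end Independence

section Survival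

variable {Ω : Type*} [MeasurableSpace Ω] {ν : Measure Ω} {C : Ω → ℝ}

theorem antitone_measure_le_toReal [IsFiniteMeasure ν] :
    Antitone fun u : ℝ ↦ (ν {ω | u ≤ C ω}).toReal :=
  fun _ _ hab ↦ ENNReal.toReal_mono (measure_ne_top _ _)
    (measure_mono fun _ hω ↦ le_trans hab hω)

theorem integral_map_ite_le (hC : Measurable C) (u : ℝ) :
    ∫ c, (if u ≤ c then (1 : ℝ) else 0) ∂(ν.map C) = (ν {ω | u ≤ C ω}).toReal := by
  have hind : (fun c : ℝ ↦ if u ≤ c then (1 : ℝ) else 0) = (Ici u).indicator 1 := by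
    ext c; simp [indicator_apply]
  rw [hind, integral_indicator_one measurableSet_Ici, measureReal_def,
    Measure.map_apply hC measurableSet_Ici]
  rfl

theorem integral_mul_ipcw_weight [IsFiniteMeasure ν] {α : Type*} [MeasurableSpace α]
    {W : Ω → α} (hW : Measurable W) (hC : Measurable C) (hind : IndepFun W C ν)
    {g : α → ℝ} (hg : Measurable g) {M : ℝ} (hgM : ∀ w, |g w| ≤ M)
    {τ : α → ℝ} (hτ : Measurable τ) {t : ℝ} (hτt : ∀ w, τ w ≤ t)
    (hCt : 0 < ν {ω | t ≤ C ω}) :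
    ∫ ω, g (W ω) * ((if τ (W ω) ≤ C ω then (1 : ℝ) else 0) /
        (ν {ω' | τ (W ω) ≤ C ω'}).toReal) ∂ν = ∫ ω, g (W ω) ∂ν := by
  set G : ℝ → ℝ := fun u ↦ (ν {ω | u ≤ C ω}).toReal
  have hGt : 0 < G t := ENNReal.toReal_pos hCt.ne' (measure_ne_top _ _)
  have hGτ : ∀ w, G t ≤ G (τ w) := fun w ↦ antitone_measure_le_toReal (hτt w)
  set φ : α × ℝ → ℝ := fun p ↦ g p.1 * ((if τ p.1 ≤ p.2 then (1 : ℝ) else 0) / G (τ p.1))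
  have hφ_meas : Measurable φ := by
    refine (hg.comp measurable_fst).mul (Measurable.div ?_ ?_)
    · exact Measurable.ite (measurableSet_le (hτ.comp measurable_fst) measurable_snd)
        measurable_const measurable_const
    · exact antitone_measure_le_toReal.measurable.comp (hτ.comp measurable_fst)
  have hφ_bound : ∀ p, ‖φ p‖ ≤ |M| / G t := fun p ↦ by
    have hweight : |(if τ p.1 ≤ p.2 then (1 : ℝ) else 0) / G (τ p.1)| ≤ 1 / G t := by
      rw [abs_div, abs_of_pos (hGt.trans_le (hGτ p.1))]
      exact div_le_div₀ zero_le_one (by split_ifs <;> simp) hGt (hGτ p.1)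
    calc ‖φ p‖ ≤ |M| * (1 / G t) := by
          rw [Real.norm_eq_abs, abs_mul]
          exact mul_le_mul ((hgM _).trans (le_abs_self M)) hweight (abs_nonneg _)
            (abs_nonneg M)
      _ = |M| / G t := mul_one_div _ _
  have hφ_int : Integrable φ ((ν.map W).prod (ν.map C)) :=
    Integrable.of_bound hφ_meas.aestronglyMeasurable _ (ae_of_all _ hφ_bound)
  have hinner : ∀ w, ∫ c, φ (w, c) ∂(ν.map C) = g w := fun w ↦ by
    calc ∫ c, φ (w, c) ∂(ν.map C)
        = g w / G (τ w) * ∫ c, (if τ w ≤ c then (1 : ℝ) else 0) ∂(ν.map C) := by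
          rw [← integral_const_mul]
          congr with c
          simp only [φ]
          ring
      _ = g w := by
          rw [integral_map_ite_le hC]
          exact div_mul_cancel₀ (g w) (hGt.trans_le (hGτ w)).ne'
  rw [hind.integral_comp_eq_integral_integral hW hC hφ_int]
  simp only [hinner]
  exact integral_map hW.aemeasurable hg.aestronglyMeasurable

end Survival

theorem ite_lt_min_mul_ite_min_le {s t a c x y : ℝ} (hst : s < t) :
    (if s < min a c then x * ((if min a t ≤ c then (1 : ℝ) else 0) / y) else 0)
      = (if s < a then x else 0) * ((if min a t ≤ c then (1 : ℝ) else 0) / y) := by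
  by_cases hw : min a t ≤ c
  · have hsac : s < min a c ↔ s < a := by
      constructor
      · exact fun h ↦ h.trans_le (min_le_left a c)
      · exact fun h ↦ lt_min h (lt_min h hst |>.trans_le hw)
    simp only [hsac, hw, if_true]
    split_ifs <;> simp
  · simp [hw]

theorem ipcw_conditional_expectation_identity_general
    {Ω E F' ι : Type*} [MeasurableSpace Ω] [MeasurableSpace E] [MeasurableSpace F']
    [MeasurableSpace ι] [MeasurableSingletonClass ι]
    (μ : Measure Ω) [IsProbabilityMeasure μ]
    (C T : Ω → ℝ) (D : Ω → E) (X : Ω → F') (Z : Ω → ι)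
    (hC : Measurable C) (hT : Measurable T) (hD : Measurable D)
    (hX : Measurable X) (hZ : Measurable Z)
    (t : ℝ) (z : ι)
    (Ff : ℝ × E × F' × ι → ℝ) (hFmeas : Measurable Ff)
    (Mb : ℝ) (hFbd : ∀ x, |Ff x| ≤ Mb)
    (hindep : IndepFun C (fun ω => (T ω, D ω, X ω)) (μ[|Z ⁻¹' {z}]))
    (hpos : 0 < (μ[|Z ⁻¹' {z}]) {ω | t ≤ C ω})
    (s : ℝ) (hs : s < t) :
    (∫ ω in {ω | s < min (T ω) (C ω)},
        Ff (T ω, D ω, X ω, Z ω) *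
          ((if min (T ω) t ≤ C ω then (1 : ℝ) else 0) /
            ((μ[|Z ⁻¹' {Z ω}]) {ω' | min (T ω) t ≤ C ω'}).toReal)
        ∂(μ[|Z ⁻¹' {z}]))
      / ((μ[|Z ⁻¹' {z}]) {ω | s < min (T ω) (C ω)}).toReal
    = (∫ ω in {ω | s < T ω}, Ff (T ω, D ω, X ω, Z ω) ∂(μ[|Z ⁻¹' {z}]))
        / (((μ[|Z ⁻¹' {z}]) {ω | s < T ω}).toReal *
           ((μ[|Z ⁻¹' {z}]) {ω | s < C ω}).toReal) := by
  set ν := μ[|Z ⁻¹' {z}]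
  have : IsProbabilityMeasure ν := cond_isProbabilityMeasure fun h ↦
    hpos.ne' (by simp [ν, cond_eq_zero_of_meas_eq_zero h])
  have hZae : ∀ᵐ ω ∂ν, Z ω = z := ae_cond_mem (hZ (measurableSet_singleton z))
  set g : ℝ × E × F' → ℝ := fun w ↦ if s < w.1 then Ff (w.1, w.2.1, w.2.2, z) else 0
  have hg : Measurable g := Measurable.ite (measurableSet_lt measurable_const measurable_fst)
    (hFmeas.comp (measurable_fst.prodMk (measurable_snd.fst.prodMk
      (measurable_snd.snd.prodMk measurable_const)))) measurable_const
  have hgM : ∀ w, |g w| ≤ |Mb| := fun w ↦ by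
    simp only [g]
    split_ifs
    exacts [(hFbd _).trans (le_abs_self Mb), by simp]
  have hnum : ∫ ω in {ω | s < min (T ω) (C ω)}, Ff (T ω, D ω, X ω, Z ω) *
        ((if min (T ω) t ≤ C ω then (1 : ℝ) else 0) /
          ((μ[|Z ⁻¹' {Z ω}]) {ω' | min (T ω) t ≤ C ω'}).toReal) ∂ν
      = ∫ ω in {ω | s < T ω}, Ff (T ω, D ω, X ω, Z ω) ∂ν := by
    rw [← integral_indicator (measurableSet_lt measurable_const (hT.min hC)),
      ← integral_indicator (measurableSet_lt measurable_const hT)]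
    calc _ = ∫ ω, g (T ω, D ω, X ω) * ((if min (T ω) t ≤ C ω then (1 : ℝ) else 0) /
            (ν {ω' | min (T ω) t ≤ C ω'}).toReal) ∂ν := by
          refine integral_congr_ae ?_
          filter_upwards [hZae] with ω hω
          simp only [indicator_apply, mem_ofPred_eq, hω]
          exact ite_lt_min_mul_ite_min_le hs
      _ = ∫ ω, g (T ω, D ω, X ω) ∂ν :=
          integral_mul_ipcw_weight (hT.prodMk (hD.prodMk hX)) hC hindep.symm hg hgM
            (τ := fun w ↦ min w.1 t) (measurable_fst.min measurable_const)
            (fun _ ↦ min_le_right _ _) hpos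
      _ = _ := by
          refine integral_congr_ae ?_
          filter_upwards [hZae] with ω hω
          simp [indicator_apply, hω, g]
  have hTC : IndepFun T C ν := (hindep.comp measurable_id measurable_fst).symm
  rw [hnum, hTC.measure_lt_min_eq_mul, ENNReal.toReal_mul]

/-- Under `C ⟂ (T,D,X) | Z` with `G(t-|z) > 0`, for bounded measurable
`f` of `(T,D,X,Z)` and `s < t` with `P(T̃ > s, Z = z) > 0` (where `T̃ = T ∧ C`),
`E(f·W | T̃ > s, Z = z) = E(f | T > s, Z = z)/G(s|z)`,
where `W = 1{C ≥ T∧t}/G((T∧t)-|Z)`. Conditional quantities given `Z = z` are expressed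
under the conditional measure `μ[|Z⁻¹'{z}]`. -/
theorem ipcw_conditional_expectation_identity
    {Ω E F' ι : Type*} [MeasurableSpace Ω] [MeasurableSpace E] [MeasurableSpace F']
    [MeasurableSpace ι] [MeasurableSingletonClass ι]
    (μ : Measure Ω) [IsProbabilityMeasure μ]
    (C T : Ω → ℝ) (D : Ω → E) (X : Ω → F') (Z : Ω → ι)
    (hC : Measurable C) (hT : Measurable T) (hD : Measurable D)
    (hX : Measurable X) (hZ : Measurable Z)
    (hCpos : ∀ ω, 0 < C ω) (hTpos : ∀ ω, 0 < T ω)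
    (t : ℝ) (ht : 0 < t) (z : ι) (hz : 0 < μ (Z ⁻¹' {z}))
    (Ff : ℝ × E × F' × ι → ℝ) (hFmeas : Measurable Ff)
    (Mb : ℝ) (hFbd : ∀ x, |Ff x| ≤ Mb)
    (hindep : IndepFun C (fun ω => (T ω, D ω, X ω)) (μ[|Z ⁻¹' {z}]))
    (hpos : 0 < (μ[|Z ⁻¹' {z}]) {ω | t ≤ C ω})
    (s : ℝ) (hs : s < t)
    (hTs : 0 < (μ[|Z ⁻¹' {z}]) {ω | s < min (T ω) (C ω)}) :
    (∫ ω in {ω | s < min (T ω) (C ω)},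
        Ff (T ω, D ω, X ω, Z ω) *
          ((if min (T ω) t ≤ C ω then (1 : ℝ) else 0) /
            ((μ[|Z ⁻¹' {Z ω}]) {ω' | min (T ω) t ≤ C ω'}).toReal)
        ∂(μ[|Z ⁻¹' {z}]))
      / ((μ[|Z ⁻¹' {z}]) {ω | s < min (T ω) (C ω)}).toReal
    = (∫ ω in {ω | s < T ω}, Ff (T ω, D ω, X ω, Z ω) ∂(μ[|Z ⁻¹' {z}]))
        / (((μ[|Z ⁻¹' {z}]) {ω | s < T ω}).toReal *
           ((μ[|Z ⁻¹' {z}]) {ω | s < C ω}).toReal) :=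
  ipcw_conditional_expectation_identity_general μ C T D X Z hC hT hD hX hZ t z Ff hFmeas Mb hFbd
    hindep hpos s hs
end
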